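/- arXiv:1607.01098 — 4 statements merged into one kernel-verified Lean document; each statement's English description precedes it below -/
import Mathlib

section
/- Let n, s be nonnegative integers with n ≥ 2s. Then ∑_{r=0}^{s} (-1)^{s-r} C(n, r) · C(n-s-r, s-r) = C(2s-1, s), where C(-1,0)=1 by convention. -/
/-- Binomial coefficient `C(n,r)` for integer arguments: zero if `r < 0` or
`0 ≤ n < r`, the usual binomial for `0 ≤ r ≤ n`, and the generalized binomial
for negative upper index. -/
def C (n r : ℤ) : ℤ :=
  if r < 0 then 0
  else if 0 ≤ n then (n.toNat.choose r.toNat : ℤ)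
  else (-1) ^ r.toNat * ((r - n - 1).toNat.choose r.toNat : ℤ)

lemma C_neg_right (n r : ℤ) (h : r < 0) : C n r = 0 := by simp [C, h]

lemma C_natCast (n r : ℕ) : C n r = (n.choose r : ℤ) := by
  simp [C]

lemma C_self (m : ℤ) (h : 0 ≤ m) : C m m = 1 := by
  unfold C
  rw [if_neg (not_lt.2 h), if_pos h, Nat.choose_self]
  norm_num

lemma C_pascal (n r : ℤ) (hn : 0 ≤ n) : C (n + 1) r = C n r + C n (r - 1) := by
  unfold C
  rcases lt_or_ge r 0 with hr | hr
  · rw [if_pos hr, if_pos hr, if_pos (by omega : r - 1 < 0)]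
    ring
  · rw [if_neg (not_lt.2 hr), if_neg (not_lt.2 hr),
      if_pos (by omega : (0:ℤ) ≤ n + 1), if_pos hn]
    rcases eq_or_lt_of_le hr with h0 | h0
    · rw [if_pos (by omega : r - 1 < 0), ← h0]
      simp
    · rw [if_neg (by omega : ¬ r - 1 < 0), if_pos hn]
      have h1 : (n + 1).toNat = n.toNat + 1 := by omega
      have h2 : r.toNat = (r - 1).toNat + 1 := by omega
      rw [h1, h2, Nat.choose_succ_succ']
      push_cast
      ring

lemma alt_sum (N : ℕ) : ∀ m : ℕ,
    ∑ r ∈ Finset.range (m + 1), (-1 : ℤ) ^ r * ((N + 1).choose r : ℤ)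
      = (-1) ^ m * (N.choose m : ℤ)
  | 0 => by simp
  | (m + 1) => by
    rw [Finset.sum_range_succ, alt_sum N m, Nat.choose_succ_succ']
    push_cast
    ring

lemma sign_split (s r : ℕ) (h : r ≤ s) :
    (-1 : ℤ) ^ (s - r) = (-1) ^ s * (-1) ^ r := by
  have h1 : (-1 : ℤ) ^ (s - r) * (-1) ^ r = (-1) ^ s := by
    rw [← pow_add, Nat.sub_add_cancel h]
  have h2 : ((-1 : ℤ) ^ r) * ((-1) ^ r) = 1 := by
    rw [← pow_add, ← two_mul, pow_mul]
    norm_num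
  calc (-1 : ℤ) ^ (s - r) = (-1) ^ (s - r) * ((-1) ^ r * (-1) ^ r) := by rw [h2, mul_one]
    _ = ((-1) ^ (s - r) * (-1) ^ r) * (-1) ^ r := by ring
    _ = (-1) ^ s * (-1) ^ r := by rw [h1]

theorem stmt_1 (n s : ℕ) (h : 2 * s ≤ n) :
    ∑ r ∈ Finset.range (s + 1),
      (-1 : ℤ) ^ (s - r) * C n r * C ((n : ℤ) - s - r) ((s : ℤ) - r)
      = C (2 * (s : ℤ) - 1) s := by
  induction n, h using Nat.le_induction with
  | base =>
    -- n = 2 * s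
    have step1 : ∀ r ∈ Finset.range (s + 1),
        (-1 : ℤ) ^ (s - r) * C (↑(2 * s)) r * C ((↑(2 * s) : ℤ) - s - r) ((s : ℤ) - r)
          = (-1) ^ s * ((-1) ^ r * ((2 * s).choose r : ℤ)) := by
      intro r hr
      have hr' : r ≤ s := Nat.lt_succ_iff.mp (Finset.mem_range.mp hr)
      have h1 : (↑(2 * s) : ℤ) - s - r = (s : ℤ) - r := by push_cast; ring
      rw [h1, C_self ((s : ℤ) - r) (by omega), C_natCast, sign_split s r hr']
      ring
    rw [Finset.sum_congr rfl step1, ← Finset.mul_sum]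
    rcases s with _ | t
    · norm_num [C]
    · have h2 : 2 * (t + 1) = (2 * t + 1) + 1 := by ring
      rw [h2, alt_sum (2 * t + 1) (t + 1)]
      have h3 : (2 * ((t : ℤ) + 1) - 1) = ((2 * t + 1 : ℕ) : ℤ) := by push_cast; ring
      push_cast [h3, C_natCast]
      rw [← mul_assoc, ← pow_add, ← two_mul, pow_mul]
      norm_num
      rw [show 2 * (t : ℤ) + 1 = ((2 * t + 1 : ℕ) : ℤ) from by push_cast; ring,
        show (t : ℤ) + 1 = ((t + 1 : ℕ) : ℤ) from by push_cast; ring, C_natCast]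
  | succ n hn ih =>
    rw [← ih]
    have key : ∀ r ∈ Finset.range (s + 1),
        (-1 : ℤ) ^ (s - r) * C (↑(n + 1)) r * C ((↑(n + 1) : ℤ) - s - r) ((s : ℤ) - r)
          = (-1 : ℤ) ^ (s - r) * C n r * C ((n : ℤ) - s - r) ((s : ℤ) - r)
            + (-1 : ℤ) ^ (s - r) * C n r * C ((n : ℤ) - s - r) ((s : ℤ) - r - 1)
            + (-1 : ℤ) ^ (s - r) * C n (r - 1) * C ((n : ℤ) + 1 - s - r) ((s : ℤ) - r) := by
      intro r hr
      have hr' : r ≤ s := Nat.lt_succ_iff.mp (Finset.mem_range.mp hr)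
      have hc : (↑(n + 1) : ℤ) = (n : ℤ) + 1 := by push_cast; ring
      have e1 : C ((n : ℤ) + 1) r = C n r + C n ((r : ℤ) - 1) :=
        C_pascal n r (by positivity)
      have e2 : C ((n : ℤ) + 1 - s - r) ((s : ℤ) - r)
          = C ((n : ℤ) - s - r) ((s : ℤ) - r) + C ((n : ℤ) - s - r) ((s : ℤ) - r - 1) := by
        have := C_pascal ((n : ℤ) - s - r) ((s : ℤ) - r) (by omega)
        rwa [show (n : ℤ) - s - r + 1 = (n : ℤ) + 1 - s - r from by ring] at this
      rw [hc]
      linear_combination ((-1 : ℤ) ^ (s - r) * C n r) * e2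
        + ((-1 : ℤ) ^ (s - r) * C ((n : ℤ) + 1 - s - r) ((s : ℤ) - r)) * e1
    rw [Finset.sum_congr rfl key]
    rw [Finset.sum_add_distrib, Finset.sum_add_distrib]
    have hS1 : ∑ r ∈ Finset.range (s + 1),
        (-1 : ℤ) ^ (s - r) * C n r * C ((n : ℤ) - s - r) ((s : ℤ) - r - 1)
        = ∑ r ∈ Finset.range s,
            (-1 : ℤ) ^ (s - r) * C n r * C ((n : ℤ) - s - r) ((s : ℤ) - r - 1) := by
      rw [Finset.sum_range_succ, C_neg_right _ _ (by omega : (s : ℤ) - s - 1 < 0)]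
      ring
    have hS2 : ∑ r ∈ Finset.range (s + 1),
        (-1 : ℤ) ^ (s - r) * C n ((r : ℤ) - 1) * C ((n : ℤ) + 1 - s - r) ((s : ℤ) - r)
        = ∑ r ∈ Finset.range s,
            -((-1 : ℤ) ^ (s - r) * C n r * C ((n : ℤ) - s - r) ((s : ℤ) - r - 1)) := by
      rw [Finset.sum_range_succ']
      rw [show C n ((0 : ℕ) - 1 : ℤ) = 0 from C_neg_right _ _ (by norm_num)]
      rw [mul_zero, zero_mul, add_zero]
      apply Finset.sum_congr rfl
      intro r hr
      have hr' : r < s := Finset.mem_range.mp hr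
      have hsign : (-1 : ℤ) ^ (s - (r + 1)) = -(-1 : ℤ) ^ (s - r) := by
        have : s - r = (s - (r + 1)) + 1 := by omega
        rw [this, pow_succ]
        ring
      have ha : ((r : ℤ) + 1) - 1 = (r : ℤ) := by ring
      have hb : (n : ℤ) + 1 - s - (r + 1) = (n : ℤ) - s - r := by ring
      have hd : (s : ℤ) - (r + 1) = (s : ℤ) - r - 1 := by ring
      push_cast [hsign, ha, hb, hd]
      ring
    rw [hS1, hS2, add_assoc, ← Finset.sum_add_distrib]
    simp
end

section
/- For integers k ≥ 1, l ≥ 2 and -1 ≤ r ≤ k-l+1: l·A_{k+1,l}^r − (k-l+2)·(A_{k,l-2}^{r+1} + A_{k,l-1}^r − A_{k,l-1}^{r+1}) = −(2k-l)·A_{k-1,l-2}^{r+1}. -/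
def A (k l r : ℤ) : ℤ :=
  C (l + r - 1) (r - 1) * C (2 * k - l - 1) (k - l - r - 1) + C (l + r) r * C (2 * k - l - 1) (k - l - r)

lemma C_of_neg {n r : ℤ} (hr : r < 0) : C n r = 0 := if_pos hr

lemma C_natCast_s12 (n : ℤ) (k : ℕ) : C n k = Ring.choose n k := by
  rcases le_or_gt 0 n with hn | hn
  · lift n to ℕ using hn
    simp [C, Ring.choose_natCast]
  · have h := Ring.choose_neg (-n) k
    rw [neg_neg] at h
    have hm : -n + k - 1 = ((k - n - 1).toNat : ℤ) := by omega
    rw [h, hm, Ring.choose_natCast, Units.smul_def, Int.coe_negOnePow_natCast]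
    simp [C, not_le.mpr hn]

lemma C_zero_right (n : ℤ) : C n 0 = 1 := by
  simpa using C_natCast_s12 n 0

lemma C_eq_C_pred_add (n r : ℤ) : C n r = C (n - 1) (r - 1) + C (n - 1) r := by
  rcases lt_trichotomy r 0 with hr | rfl | hr
  · rw [C_of_neg hr, C_of_neg (by omega), C_of_neg hr, add_zero]
  · simp [C_zero_right, C_of_neg]
  · obtain ⟨t, rfl⟩ : ∃ t : ℕ, r = t + 1 := ⟨(r - 1).toNat, by omega⟩
    simpa [← C_natCast_s12] using Ring.choose_succ_succ (n - 1) t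

lemma C_succ_right_eq (n r : ℤ) : C n (r + 1) * (r + 1) = C n r * (n - r) := by
  rcases lt_trichotomy r (-1) with hr | rfl | hr
  · rw [C_of_neg (by omega), C_of_neg (by omega), zero_mul, zero_mul]
  · simp [C_of_neg]
  · lift r to ℕ using (by omega)
    have h := Ring.choose_smul_choose n (Nat.le_succ r)
    rw [Nat.choose_succ_self_right, show r.succ - r = 1 by omega, Ring.choose_one_right,
      nsmul_eq_mul] at h
    rw [← Nat.cast_succ, C_natCast_s12, C_natCast_s12]
    push_cast at h ⊢
    linarith

lemma A_contiguous_l (k l r : ℤ) :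
    (2 * k - l + 2 * r) * A k l r + (3 * l + 2 * r - 2 * k - 2) * A k l (r - 1) =
      (k - l + 1) * A k (l - 1) r := by
  have up₁ := fun j ↦ C_eq_C_pred_add (l + r - 1) j
  have up₂ := fun j ↦ C_eq_C_pred_add (l + r) j
  have low₁ := fun j ↦ C_eq_C_pred_add (2 * k - l) j
  simp only [A]
  -- common normal form of the arguments, so that the Pascal rules apply syntactically
  ring_nf at up₁ up₂ low₁ ⊢
  simp only [up₁, up₂, low₁]
  linear_combination (norm := ring_nf)
    (C (2 * k - l - 1) (k - l - r - 1) - C (2 * k - l - 1) (k - l - r + 1)) *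
      C_succ_right_eq (l + r - 2) (r - 2) +
    (C (2 * k - l - 1) (k - l - r) - C (2 * k - l - 1) (k - l - r + 1)) *
      C_succ_right_eq (l + r - 2) (r - 1) -
    (2 * C (l + r - 2) (r - 2) + C (l + r - 2) (r - 1)) *
      C_succ_right_eq (2 * k - l - 1) (k - l - r - 1) -
    (2 * C (l + r - 2) (r - 2) + 3 * C (l + r - 2) (r - 1) + C (l + r - 2) r) *
      C_succ_right_eq (2 * k - l - 1) (k - l - r)

lemma A_contiguous_k (k l r : ℤ) :
    l * A (k + 1) l r + (2 * k - l) * A (k - 1) (l - 2) (r + 1) =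
      (2 * l + 2 * r - k - 1) * A k (l - 1) r + (k + 1 + 2 * r) * A k (l - 1) (r + 1) := by
  have up₁ := fun j ↦ C_eq_C_pred_add (l + r - 1) j
  have up₂ := fun j ↦ C_eq_C_pred_add (l + r) j
  have low₁ := fun j ↦ C_eq_C_pred_add (2 * k - l) j
  have low₂ := fun j ↦ C_eq_C_pred_add (2 * k - l + 1) j
  simp only [A]
  ring_nf at up₁ up₂ low₁ low₂ ⊢
  simp only [up₁, up₂, low₁, low₂]
  linear_combination (norm := ring_nf)
    -(C (2 * k - l - 1) (k - l - r - 2) + 3 * C (2 * k - l - 1) (k - l - r - 1) +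
        3 * C (2 * k - l - 1) (k - l - r) + C (2 * k - l - 1) (k - l - r + 1)) *
      (C_succ_right_eq (l + r - 2) (r - 2) + C_succ_right_eq (l + r - 2) (r - 1)) -
    (C (2 * k - l - 1) (k - l - r - 1) + C (2 * k - l - 1) (k - l - r)) *
      C_succ_right_eq (l + r - 2) r +
    (C (l + r - 2) (r - 1) + C (l + r - 2) r) *
      (C_succ_right_eq (2 * k - l - 1) (k - l - r - 2) +
        C_succ_right_eq (2 * k - l - 1) (k - l - r)) +
    (2 * C (l + r - 2) (r - 1) + 2 * C (l + r - 2) r + C (l + r - 2) (r + 1)) *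
      C_succ_right_eq (2 * k - l - 1) (k - l - r - 1)

theorem stmt_12_general (k l r : ℤ) :
    l * A (k + 1) l r - (k - l + 2) * (A k (l - 2) (r + 1) + A k (l - 1) r - A k (l - 1) (r + 1))
      = -((2 * k - l) * A (k - 1) (l - 2) (r + 1)) := by
  linear_combination (norm := ring_nf) A_contiguous_k k l r + A_contiguous_l k (l - 1) (r + 1)

theorem stmt_12 (k l r : ℤ) (hk : 1 ≤ k) (hl : 2 ≤ l) (hr : -1 ≤ r) (hr' : r ≤ k - l + 1) :
    l * A (k + 1) l r - (k - l + 2) * (A k (l - 2) (r + 1) + A k (l - 1) r - A k (l - 1) (r + 1))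
      = -((2 * k - l) * A (k - 1) (l - 2) (r + 1)) :=
  stmt_12_general k l r
end

section
/- For k ≥ 1 and any v, P_{k+1}^{(l+1)}(v) = ((k+1) - (2k+1)v) P_k^{(l)}(v) − (2k+1) l P_k^{(l-1)}(v), where P_k(v) = v^k(1-v)^{k-1} and the term with P_k^{(-1)} is omitted when l = 0. -/
noncomputable def P (k : ℕ) : ℝ → ℝ := fun v => v ^ k * (1 - v) ^ (k - 1)

noncomputable def Q : ℝ → ℝ := fun v => v * (1 - v)

noncomputable def R : ℝ → ℝ := fun v => 1 - 3 * v

/-!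
For `k ≥ 1`, `P (k + 1) v = v * (1 - v) * P k v`, so one differentiation gives
`P (k + 1)' = ((k + 1) - (2k + 1) v) * P k`. Differentiating a product with an affine factor
`l` more times, only the first two terms of the Leibniz rule survive.
-/

open scoped ContDiff

section AffineLeibniz

variable {𝕜 : Type*} [NontriviallyNormedField 𝕜] {g : 𝕜 → 𝕜}

theorem ContDiff.hasDerivAt_iteratedDeriv (hg : ContDiff 𝕜 ∞ g) (n : ℕ) (x : 𝕜) :
    HasDerivAt (iteratedDeriv n g) (iteratedDeriv (n + 1) g x) x := by
  rw [iteratedDeriv_succ]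
  exact (hg.differentiable_iteratedDeriv n (mod_cast ENat.natCast_lt_top n)).differentiableAt
    |>.hasDerivAt

/-- For `n = 0` the truncated index `n - 1` is harmless: the factor `n` kills the term. -/
theorem ContDiff.hasDerivAt_mul_natCast_mul_iteratedDeriv_pred (hg : ContDiff 𝕜 ∞ g) (c : 𝕜)
    (n : ℕ) (x : 𝕜) :
    HasDerivAt (fun y => c * n * iteratedDeriv (n - 1) g y) (c * n * iteratedDeriv n g x) x := by
  cases n with
  | zero => simpa using hasDerivAt_const x (0 : 𝕜)
  | succ n => exact (hg.hasDerivAt_iteratedDeriv n x).const_mul _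

theorem iteratedDeriv_affine_mul (hg : ContDiff 𝕜 ∞ g) (a b : 𝕜) (n : ℕ) :
    iteratedDeriv n (fun y => (a - b * y) * g y) =
      fun y => (a - b * y) * iteratedDeriv n g y - b * n * iteratedDeriv (n - 1) g y := by
  induction n with
  | zero => simp
  | succ n ih =>
    ext x
    have hAffine : HasDerivAt (fun y => a - b * y) (-b) x := by
      simpa using ((hasDerivAt_id x).const_mul b).const_sub a
    have h := (hAffine.fun_mul (hg.hasDerivAt_iteratedDeriv n x)).fun_sub
      (hg.hasDerivAt_mul_natCast_mul_iteratedDeriv_pred b n x)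
    rw [iteratedDeriv_succ, ih, h.deriv]
    push_cast
    ring

end AffineLeibniz

theorem contDiff_P (k : ℕ) : ContDiff ℝ ∞ (P k) :=
  (contDiff_id.pow _).mul ((contDiff_const.sub contDiff_id).pow _)

theorem hasDerivAt_P_succ {k : ℕ} (hk : 1 ≤ k) (v : ℝ) :
    HasDerivAt (P (k + 1)) ((k + 1 - (2 * k + 1) * v) * P k v) v := by
  obtain ⟨m, rfl⟩ := Nat.exists_eq_add_of_le' hk
  have h := (hasDerivAt_pow (m + 2) v).fun_mul (((hasDerivAt_id' v).const_sub 1).fun_pow (m + 1))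
  refine h.congr_deriv ?_
  simp only [P, Nat.add_sub_cancel]
  push_cast
  ring

theorem stmt_16 (k l : ℕ) (hk : 1 ≤ k) (v : ℝ) :
    iteratedDeriv (l + 1) (P (k + 1)) v =
      (((k : ℝ) + 1) - (2 * (k : ℝ) + 1) * v) * iteratedDeriv l (P k) v
        - (2 * (k : ℝ) + 1) * (l : ℝ) * iteratedDeriv (l - 1) (P k) v := by
  have hderiv : deriv (P (k + 1)) = fun v => (k + 1 - (2 * k + 1) * v) * P k v :=
    funext fun v => (hasDerivAt_P_succ hk v).deriv
  rw [iteratedDeriv_succ', hderiv, iteratedDeriv_affine_mul (contDiff_P k)]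
end

section
/- Suppose n ≥ l ≥ 0. Then ∑_{r=0}^{⌊(n-l)/2⌋} D_n^r · 2^{n-2r} C(n-2r, l) · I_ν^{(n-l-2r)}(z) = 2^l ∑_{s=0}^{n-l} B_{l,n}^s · I_{ν-n+l+2s}(z), where D_n^r = (-1)^r (C(n-r,r) + C(n-r-1,r-1)) and B_{l,n}^s = C(l+s, s)·C(n-s, n-l-s) − C(l+s-1, s-1)·C(n-s-1, n-l-s-1). -/
def D (n r : ℤ) : ℤ := (-1) ^ r.toNat * (C (n - r) r + C (n - r - 1) (r - 1))

def B (l n r : ℤ) : ℤ :=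
  C (l + r) r * C (n - r) (n - l - r) - C (l + r - 1) (r - 1) * C (n - r - 1) (n - l - r - 1)

lemma C_neg {m k : ℤ} (h : k < 0) : C m k = 0 := by simp [C, h]

lemma C_nat (m k : ℕ) : C m k = (m.choose k : ℤ) := by
  simp [C, Int.toNat_natCast]

lemma C_zero_lt {m k : ℤ} (h0 : 0 ≤ m) (h : m < k) : C m k = 0 := by
  have hk : ¬ k < 0 := by omega
  simp only [C, if_neg hk, if_pos h0]
  rw [Nat.choose_eq_zero_of_lt (by omega)]
  simp

lemma C_zero (m : ℤ) : C m 0 = 1 := by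
  by_cases h0 : 0 ≤ m <;> simp [C, h0]

lemma C_pascal_s18 (m k : ℤ) : C m k = C (m-1) (k-1) + C (m-1) k := by
  rcases lt_or_ge k 0 with hk | hk
  · rw [C_neg hk, C_neg (by omega), C_neg hk]; ring
  rcases eq_or_lt_of_le hk with hk0 | hk1
  · rw [← hk0, C_zero, C_neg (by omega), C_zero]; ring
  · -- k ≥ 1
    rcases lt_trichotomy m 0 with hm | hm | hm
    · -- m < 0, m - 1 < 0
      have e1 : C m k = (-1)^k.toNat * ((k - m - 1).toNat.choose k.toNat : ℤ) := by
        simp only [C, if_neg (show ¬ k < 0 by omega), if_neg (show ¬ (0:ℤ) ≤ m by omega)]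
      have e2 : C (m-1) (k-1) = (-1)^(k-1).toNat * ((k - m - 1).toNat.choose (k-1).toNat : ℤ) := by
        simp only [C, if_neg (show ¬ k - 1 < 0 by omega), if_neg (show ¬ (0:ℤ) ≤ m - 1 by omega)]
        rw [show k - 1 - (m - 1) - 1 = k - m - 1 by ring]
      have e3 : C (m-1) k = (-1)^k.toNat * ((k - m).toNat.choose k.toNat : ℤ) := by
        simp only [C, if_neg (show ¬ k < 0 by omega), if_neg (show ¬ (0:ℤ) ≤ m - 1 by omega)]
        rw [show k - (m - 1) - 1 = k - m by ring]
      rw [e1, e2, e3]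
      have h1 : k.toNat = (k-1).toNat + 1 := by omega
      have h2 : (k - m).toNat = (k - m - 1).toNat + 1 := by omega
      rw [h1, h2, Nat.choose_succ_succ]
      push_cast
      ring
    · -- m = 0
      subst hm
      have e1 : C 0 k = 0 := C_zero_lt le_rfl hk1
      have e2 : C (-1) (k-1) = (-1)^(k-1).toNat * (((k-1)).toNat.choose (k-1).toNat : ℤ) := by
        simp only [C, if_neg (show ¬ k - 1 < 0 by omega), if_neg (show ¬ (0:ℤ) ≤ -1 by norm_num)]
        rw [show k - 1 - -1 - 1 = k - 1 by ring]
      have e3 : C (-1) k = (-1)^k.toNat * ((k).toNat.choose k.toNat : ℤ) := by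
        simp only [C, if_neg (show ¬ k < 0 by omega), if_neg (show ¬ (0:ℤ) ≤ -1 by norm_num)]
        rw [show k - -1 - 1 = k by ring]
      rw [show (0:ℤ) - 1 = -1 by ring] at *
      rw [e1, e2, e3, Nat.choose_self, Nat.choose_self]
      have h1 : k.toNat = (k-1).toNat + 1 := by omega
      rw [h1]
      push_cast
      ring
    · -- m ≥ 1
      have hm1 : (0:ℤ) ≤ m - 1 := by omega
      simp only [C, if_neg (show ¬ k < 0 by omega), if_neg (show ¬ k - 1 < 0 by omega),
        if_pos (le_of_lt hm), if_pos hm1]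
      have h1 : m.toNat = (m-1).toNat + 1 := by omega
      have h2 : k.toNat = (k-1).toNat + 1 := by omega
      rw [h1, h2, Nat.choose_succ_succ]
      push_cast
      ring

lemma C_symm {m : ℤ} (h : 0 ≤ m) (k : ℤ) : C m k = C m (m - k) := by
  rcases lt_or_ge k 0 with hk | hk
  · rw [C_neg hk, C_zero_lt h (by omega)]
  rcases le_or_gt k m with hkm | hkm
  · have hmk : 0 ≤ m - k := by omega
    simp only [C, if_neg (show ¬ k < 0 by omega), if_neg (show ¬ m - k < 0 by omega), if_pos h]
    have : (m - k).toNat = m.toNat - k.toNat := by omega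
    rw [this, Nat.choose_symm (by omega)]
  · rw [C_zero_lt h hkm, C_neg (by omega)]

lemma nat_tri (a b c : ℕ) (h : b + c ≤ a) :
    a.choose b * (a-b).choose c = a.choose (b+c) * (b+c).choose b := by
  have hb : b ≤ a := by omega
  have h1 := Nat.choose_mul_factorial_mul_factorial hb
  have h2 := Nat.choose_mul_factorial_mul_factorial (show c ≤ a - b by omega)
  have h3 := Nat.choose_mul_factorial_mul_factorial (show b ≤ b + c by omega)
  have h4 := Nat.choose_mul_factorial_mul_factorial h
  have hc : (b + c) - b = c := by omega
  have hd : a - b - c = a - (b + c) := by omega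
  rw [hc] at h3
  rw [hd] at h2
  apply Nat.eq_of_mul_eq_mul_right
    (show 0 < b.factorial * c.factorial * (a - (b+c)).factorial by positivity)
  calc a.choose b * (a-b).choose c * (b.factorial * c.factorial * (a - (b+c)).factorial)
      = (a.choose b * b.factorial) * ((a-b).choose c * c.factorial * (a - (b+c)).factorial) := by
        ring
    _ = (a.choose b * b.factorial) * (a-b).factorial := by rw [h2]
    _ = a.factorial := by rw [← h1]
    _ = a.choose (b+c) * (b+c).factorial * (a - (b+c)).factorial := by rw [h4]
    _ = a.choose (b+c) * ((b+c).choose b * b.factorial * c.factorial) * (a - (b+c)).factorial := by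
        rw [h3]
    _ = a.choose (b+c) * (b+c).choose b * (b.factorial * c.factorial * (a - (b+c)).factorial) := by
        ring

lemma E2 (s : ℕ) : ∀ n m : ℤ, ∑ r ∈ Finset.range (s+1),
    (-1 : ℤ)^r * C s r * C (n - r) m = C (n - s) (m - s) := by
  induction s with
  | zero => intro n m; simp [C_zero]
  | succ s ih =>
    intro n m
    have hsplit : ∀ r : ℕ, C (s+1 : ℕ) r = C s (r - 1) + C s r := by
      intro r
      have := C_pascal_s18 ((s:ℤ)+1) r
      rw [show ((s:ℤ)+1) - 1 = (s:ℤ) by ring] at this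
      rw [show (((s:ℕ)+1 : ℕ) : ℤ) = (s:ℤ)+1 by push_cast; ring]
      exact this
    calc ∑ r ∈ Finset.range (s+2), (-1 : ℤ)^r * C (s+1 : ℕ) r * C (n - r) m
        = ∑ r ∈ Finset.range (s+2),
            ((-1 : ℤ)^r * C s ((r:ℤ) - 1) * C (n - r) m + (-1 : ℤ)^r * C s r * C (n - r) m) := by
          apply Finset.sum_congr rfl
          intro r _
          rw [hsplit r]
          ring
      _ = (∑ r ∈ Finset.range (s+2), (-1 : ℤ)^r * C s ((r:ℤ) - 1) * C (n - r) m)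
          + ∑ r ∈ Finset.range (s+2), (-1 : ℤ)^r * C s r * C (n - r) m := by
          rw [Finset.sum_add_distrib]
      _ = (∑ r ∈ Finset.range (s+1), (-1 : ℤ)^(r+1) * C s (((r:ℕ)+1 : ℕ) - 1 : ℤ) * C (n - ((r:ℕ)+1 : ℕ)) m)
          + ∑ r ∈ Finset.range (s+1), (-1 : ℤ)^r * C s r * C (n - r) m := by
          congr 1
          · rw [Finset.sum_range_succ' _ (s+1)]
            simp [C_neg (show (-1:ℤ) < 0 by norm_num)]
          · rw [Finset.sum_range_succ]
            rw [C_zero_lt (show (0:ℤ) ≤ s by positivity) (by exact_mod_cast Nat.lt_succ_self s)]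
            ring
      _ = -(∑ r ∈ Finset.range (s+1), (-1 : ℤ)^r * C s r * C ((n-1) - r) m) + C (n - s) (m - s) := by
          rw [ih n m]
          congr 1
          rw [← Finset.sum_neg_distrib]
          apply Finset.sum_congr rfl
          intro r _
          push_cast
          rw [show (n - ((r:ℤ) + 1)) = (n - 1) - r by ring, show (r:ℤ) + 1 - 1 = r by ring]
          ring
      _ = C (n - s) (m - s) - C (n - 1 - s) (m - s) := by rw [ih (n-1) m]; ring
      _ = C (n - (s+1 : ℕ)) (m - (s+1 : ℕ)) := by
          have := C_pascal_s18 (n - s) (m - s)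
          push_cast
          rw [show n - ((s:ℤ)+1) = (n - s) - 1 by ring, show m - ((s:ℤ)+1) = (m - s) - 1 by ring,
            show n - 1 - (s:ℤ) = n - s - 1 by ring]
          linarith [this]

lemma E1nat (n l r s : ℕ) (hrs : r ≤ s) (hn : r + s + l ≤ n) :
    ((n-r).choose r : ℤ) * (n-2*r).choose l * (n-l-2*r).choose (s-r)
      = (s.choose r : ℤ) * (s+l).choose s * (n-r).choose (s+l) := by
  have t1 := nat_tri (n-r) r l (by omega)
  have t2 := nat_tri (n-r) (r+l) (s-r) (by omega)
  have t3 := nat_tri (s+l) l r (by omega)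
  rw [show n - r - r = n - 2*r by omega] at t1
  rw [show n - r - (r+l) = n - l - 2*r by omega, show r + l + (s - r) = s + l by omega] at t2
  rw [show s + l - l = s by omega] at t3
  rw [show (s+l).choose l = (s+l).choose s by rw [← Nat.choose_symm (by omega)]; congr 1; omega] at t3
  rw [show (l+r).choose l = (r+l).choose r by rw [← Nat.choose_symm (by omega)]; congr 1 <;> omega] at t3
  rw [show l + r = r + l by omega] at t3
  have z1 : ((n-r).choose r : ℤ) * (n-2*r).choose l
      = ((n-r).choose (r+l) : ℤ) * (r+l).choose r := by exact_mod_cast t1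
  have z2 : ((n-r).choose (r+l) : ℤ) * (n-l-2*r).choose (s-r)
      = ((n-r).choose (s+l) : ℤ) * (s+l).choose (r+l) := by exact_mod_cast t2
  have z3 : ((s+l).choose s : ℤ) * s.choose r
      = ((s+l).choose (r+l) : ℤ) * (r+l).choose r := by exact_mod_cast t3
  linear_combination ((n-l-2*r).choose (s-r) : ℤ) * z1 + ((r+l).choose r : ℤ) * z2
    - ((n-r).choose (s+l) : ℤ) * z3

lemma E1 (n l r s : ℕ) (h : 2*r + l ≤ n) :
    C ((n:ℤ) - r) r * (C ((n:ℤ) - 2*r) l * C ((n:ℤ) - l - 2*r) ((s:ℤ) - r))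
      = C s r * (C ((s:ℤ) + l) s * C ((n:ℤ) - r) ((s:ℤ) + l)) := by
  rcases lt_or_ge s r with hsr | hsr
  · rw [C_neg (show (s:ℤ) - r < 0 by omega),
      C_zero_lt (show (0:ℤ) ≤ s by positivity) (by exact_mod_cast hsr)]
    ring
  rcases lt_or_ge n (r + s + l) with hn | hn
  · rw [C_zero_lt (show (0:ℤ) ≤ (n:ℤ) - l - 2*r by omega) (show (n:ℤ) - l - 2*r < (s:ℤ) - r by omega),
      C_zero_lt (show (0:ℤ) ≤ (n:ℤ) - r by omega) (show (n:ℤ) - r < (s:ℤ) + l by omega)]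
    ring
  · have e1 : C ((n:ℤ) - r) r = ((n-r).choose r : ℤ) := by
      rw [show (n:ℤ) - r = ((n - r : ℕ) : ℤ) by omega]; exact C_nat _ _
    have e2 : C ((n:ℤ) - 2*r) l = ((n-2*r).choose l : ℤ) := by
      rw [show (n:ℤ) - 2*r = ((n - 2*r : ℕ) : ℤ) by omega]; exact C_nat _ _
    have e3 : C ((n:ℤ) - l - 2*r) ((s:ℤ) - r) = ((n-l-2*r).choose (s-r) : ℤ) := by
      rw [show (n:ℤ) - l - 2*r = ((n - l - 2*r : ℕ) : ℤ) by omega,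
        show (s:ℤ) - r = ((s - r : ℕ) : ℤ) by omega]; exact C_nat _ _
    have e4 : C ((s:ℤ) + l) s = (((s+l)).choose s : ℤ) := by
      rw [show (s:ℤ) + l = ((s + l : ℕ) : ℤ) by omega]; exact C_nat _ _
    have e5 : C ((n:ℤ) - r) ((s:ℤ) + l) = ((n-r).choose (s+l) : ℤ) := by
      rw [show (n:ℤ) - r = ((n - r : ℕ) : ℤ) by omega,
        show (s:ℤ) + l = ((s + l : ℕ) : ℤ) by omega]; exact C_nat _ _
    rw [e1, e2, e3, e4, e5, C_nat]
    rw [← mul_assoc, ← mul_assoc, E1nat n l r s hsr hn]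

lemma core (n l s : ℕ) (hl : l ≤ n) (hs : s ≤ n - l) :
    ∑ r ∈ Finset.range ((n - l)/2 + 1),
      (-1 : ℤ)^r * (C ((n:ℤ) - r) r * (C ((n:ℤ) - 2*r) l * C ((n:ℤ) - l - 2*r) ((s:ℤ) - r)))
    = C ((s:ℤ) + l) s * C ((n:ℤ) - s) l := by
  have step1 : ∑ r ∈ Finset.range ((n - l)/2 + 1),
      (-1 : ℤ)^r * (C ((n:ℤ) - r) r * (C ((n:ℤ) - 2*r) l * C ((n:ℤ) - l - 2*r) ((s:ℤ) - r)))
      = ∑ r ∈ Finset.range ((n - l)/2 + 1),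
        (-1 : ℤ)^r * (C s r * (C ((s:ℤ) + l) s * C ((n:ℤ) - r) ((s:ℤ) + l))) := by
    apply Finset.sum_congr rfl
    intro r hr
    rw [Finset.mem_range] at hr
    rw [E1 n l r s (by omega)]
  rw [step1]
  have step2 : ∑ r ∈ Finset.range ((n - l)/2 + 1),
      (-1 : ℤ)^r * (C s r * (C ((s:ℤ) + l) s * C ((n:ℤ) - r) ((s:ℤ) + l)))
      = ∑ r ∈ Finset.range (n + 1),
        (-1 : ℤ)^r * (C s r * (C ((s:ℤ) + l) s * C ((n:ℤ) - r) ((s:ℤ) + l))) := by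
    apply Finset.sum_subset (Finset.range_subset_range.mpr (by omega))
    intro x hx hnx
    rw [Finset.mem_range] at hx hnx
    push_neg at hnx
    rcases lt_or_ge s x with hsx | hsx
    · rw [C_zero_lt (show (0:ℤ) ≤ s by positivity) (by exact_mod_cast hsx)]
      ring
    · rw [C_zero_lt (show (0:ℤ) ≤ (n:ℤ) - x by omega) (show (n:ℤ) - x < (s:ℤ) + l by omega)]
      ring
  have step3 : ∑ r ∈ Finset.range (s + 1),
      (-1 : ℤ)^r * (C s r * (C ((s:ℤ) + l) s * C ((n:ℤ) - r) ((s:ℤ) + l)))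
      = ∑ r ∈ Finset.range (n + 1),
        (-1 : ℤ)^r * (C s r * (C ((s:ℤ) + l) s * C ((n:ℤ) - r) ((s:ℤ) + l))) := by
    apply Finset.sum_subset (Finset.range_subset_range.mpr (by omega))
    intro x hx hnx
    rw [Finset.mem_range] at hx hnx
    push_neg at hnx
    rw [C_zero_lt (show (0:ℤ) ≤ s by positivity) (by exact_mod_cast hnx)]
    ring
  rw [step2, ← step3]
  have step4 : ∑ r ∈ Finset.range (s + 1),
      (-1 : ℤ)^r * (C s r * (C ((s:ℤ) + l) s * C ((n:ℤ) - r) ((s:ℤ) + l)))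
      = C ((s:ℤ) + l) s * ∑ r ∈ Finset.range (s + 1),
        (-1 : ℤ)^r * C s r * C ((n:ℤ) - r) ((s:ℤ) + l) := by
    rw [Finset.mul_sum]
    apply Finset.sum_congr rfl
    intro r _
    ring
  rw [step4, E2 s n ((s:ℤ) + l), show (s:ℤ) + l - s = (l:ℤ) by ring]

lemma part2 (n l s : ℕ) (hl : l ≤ n) (hs : s ≤ n - l) :
    ∑ r ∈ Finset.range ((n - l)/2 + 1),
      (D n r : ℤ) * C ((n:ℤ) - 2*r) l * C ((n:ℤ) - l - 2*r) ((n:ℤ) - l - r - s)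
    = B l n s := by
  have expand : ∑ r ∈ Finset.range ((n - l)/2 + 1),
      (D n r : ℤ) * C ((n:ℤ) - 2*r) l * C ((n:ℤ) - l - 2*r) ((n:ℤ) - l - r - s)
      = (∑ r ∈ Finset.range ((n - l)/2 + 1),
          (-1 : ℤ)^r * (C ((n:ℤ) - r) r * (C ((n:ℤ) - 2*r) l * C ((n:ℤ) - l - 2*r) ((s:ℤ) - r))))
        + ∑ r ∈ Finset.range ((n - l)/2 + 1),
          (-1 : ℤ)^r * C ((n:ℤ) - r - 1) ((r:ℤ) - 1) * (C ((n:ℤ) - 2*r) l * C ((n:ℤ) - l - 2*r) ((s:ℤ) - r)) := by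
    rw [← Finset.sum_add_distrib]
    apply Finset.sum_congr rfl
    intro r hr
    rw [Finset.mem_range] at hr
    have hsym : C ((n:ℤ) - l - 2*r) ((n:ℤ) - l - r - s)
        = C ((n:ℤ) - l - 2*r) ((s:ℤ) - r) := by
      rw [C_symm (show (0:ℤ) ≤ (n:ℤ) - l - 2*r by omega),
        show (n:ℤ) - l - 2*r - ((n:ℤ) - l - r - s) = (s:ℤ) - r by ring]
    rw [hsym]
    show D (n:ℤ) (r:ℤ) * _ * _ = _
    rw [D, Int.toNat_natCast]
    ring
  rw [expand, core n l s hl hs]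
  have hsum2 : ∑ r ∈ Finset.range ((n - l)/2 + 1),
      (-1 : ℤ)^r * C ((n:ℤ) - r - 1) ((r:ℤ) - 1) * (C ((n:ℤ) - 2*r) l * C ((n:ℤ) - l - 2*r) ((s:ℤ) - r))
      = - (C ((l:ℤ) + s - 1) ((s:ℤ) - 1) * C ((n:ℤ) - s - 1) ((n:ℤ) - l - s - 1)) := by
    rcases Nat.eq_zero_or_pos s with hs0 | hs1
    · subst hs0
      rw [Finset.sum_eq_zero, C_neg (show ((0:ℕ):ℤ) - 1 < 0 by norm_num)]
      · ring
      · intro r hr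
        rcases Nat.eq_zero_or_pos r with hr0 | hr1
        · subst hr0
          rw [C_neg (show ((0:ℕ):ℤ) - 1 < 0 by norm_num)]
          ring
        · rw [C_neg (show ((0:ℕ):ℤ) - (r:ℤ) < 0 by omega)]
          ring
    · rw [Finset.sum_range_succ']
      rw [C_neg (show ((0:ℕ):ℤ) - 1 < 0 by norm_num)]
      rcases le_or_gt (n - l) 1 with hnl1 | hnl2
      · have hseq : s = 1 := by omega
        have hrange : (n - l)/2 = 0 := by omega
        rw [hrange]
        rw [C_neg (show (n:ℤ) - l - s - 1 < 0 by omega)]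
        simp
      · rcases eq_or_lt_of_le hs with hsnl | hslt
        · -- s = n - l
          rw [Finset.sum_eq_zero, C_neg (show (n:ℤ) - l - s - 1 < 0 by omega)]
          · simp
          · intro r hr
            rw [Finset.mem_range] at hr
            rw [C_zero_lt (show (0:ℤ) ≤ (n:ℤ) - l - 2*(((r:ℕ)+1 : ℕ):ℤ) by push_cast; omega)
              (show (n:ℤ) - l - 2*(((r:ℕ)+1 : ℕ):ℤ) < (s:ℤ) - (((r:ℕ)+1 : ℕ):ℤ) by push_cast; omega)]
            ring
        · -- 1 ≤ s ≤ n - l - 1, n - l ≥ 2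
          have hn2 : 2 ≤ n := by omega
          have htrans : ∑ r ∈ Finset.range ((n - l)/2),
              (-1 : ℤ)^(r+1) * C ((n:ℤ) - (((r:ℕ)+1:ℕ):ℤ) - 1) ((((r:ℕ)+1:ℕ):ℤ) - 1)
                * (C ((n:ℤ) - 2*(((r:ℕ)+1:ℕ):ℤ)) l * C ((n:ℤ) - l - 2*(((r:ℕ)+1:ℕ):ℤ)) ((s:ℤ) - (((r:ℕ)+1:ℕ):ℤ)))
              = - ∑ r ∈ Finset.range (((n-2) - l)/2 + 1),
                (-1 : ℤ)^r * (C (((n-2:ℕ):ℤ) - r) r * (C (((n-2:ℕ):ℤ) - 2*r) l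
                  * C (((n-2:ℕ):ℤ) - l - 2*r) (((s-1:ℕ):ℤ) - r))) := by
            rw [← Finset.sum_neg_distrib]
            apply Finset.sum_congr (by congr 1; omega)
            intro r _
            rw [show (n:ℤ) - (((r:ℕ)+1:ℕ):ℤ) - 1 = ((n-2:ℕ):ℤ) - r by push_cast; omega,
              show (((r:ℕ)+1:ℕ):ℤ) - 1 = (r:ℤ) by push_cast; ring,
              show (n:ℤ) - 2*(((r:ℕ)+1:ℕ):ℤ) = ((n-2:ℕ):ℤ) - 2*r by push_cast; omega,
              show (n:ℤ) - l - 2*(((r:ℕ)+1:ℕ):ℤ) = ((n-2:ℕ):ℤ) - l - 2*r by push_cast; omega,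
              show (s:ℤ) - (((r:ℕ)+1:ℕ):ℤ) = ((s-1:ℕ):ℤ) - r by push_cast; omega]
            ring
          rw [htrans, core (n-2) l (s-1) (by omega) (by omega)]
          rw [show ((s-1:ℕ):ℤ) + l = (l:ℤ) + s - 1 by push_cast; omega,
            show (((s-1:ℕ)):ℤ) = (s:ℤ) - 1 by push_cast; omega,
            show ((n-2:ℕ):ℤ) - ((s:ℤ) - 1) = (n:ℤ) - s - 1 by push_cast; omega]
          rw [C_symm (show (0:ℤ) ≤ (n:ℤ) - s - 1 by omega) (l:ℤ),
            show (n:ℤ) - s - 1 - l = (n:ℤ) - l - s - 1 by ring]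
          ring
  rw [hsum2]
  show _ = B (l:ℤ) (n:ℤ) (s:ℤ)
  rw [B]
  rw [show (s:ℤ) + l = (l:ℤ) + s by ring]
  rw [C_symm (show (0:ℤ) ≤ (n:ℤ) - s by omega) (l:ℤ),
    show (n:ℤ) - s - l = (n:ℤ) - l - s by ring]
  ring

lemma C_inner_sum (I : ℤ → ℂ → ℂ) (ν : ℤ) (z : ℂ) (n l r : ℕ) (hl : l ≤ n) (h2r : 2*r ≤ n - l) :
    ∑ j ∈ Finset.range ((n - l - 2*r) + 1),
      (C (↑(n - l - 2*r)) ↑j : ℂ) * I (ν + ↑(n - l - 2*r) - 2*↑j) z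
    = ∑ t ∈ Finset.range (n - l + 1),
      (C ((n:ℤ) - l - 2*r) ((n:ℤ) - l - r - t) : ℂ) * I (ν - n + l + 2*t) z := by
  set m := n - l - 2*r with hm
  calc ∑ j ∈ Finset.range (m + 1), (C (↑m) ↑j : ℂ) * I (ν + ↑m - 2*↑j) z
      = ∑ j ∈ Finset.range (m + 1), (C (↑m) ↑(m + 1 - 1 - j) : ℂ) * I (ν + ↑m - 2*↑(m + 1 - 1 - j)) z := by
        exact (Finset.sum_range_reflect (fun j => (C (↑m) ↑j : ℂ) * I (ν + ↑m - 2*↑j) z) (m+1)).symm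
    _ = ∑ j ∈ Finset.range (m + 1),
          (C ((n:ℤ) - l - 2*r) ((n:ℤ) - l - r - ↑(r + j)) : ℂ) * I (ν - n + l + 2*↑(r + j)) z := by
        apply Finset.sum_congr rfl
        intro j hj
        rw [Finset.mem_range] at hj
        have h1 : C (↑m) ↑(m + 1 - 1 - j) = C ((n:ℤ) - l - 2*r) ((n:ℤ) - l - r - ↑(r + j)) := by
          congr 1 <;> omega
        have h2 : ν + ↑m - 2*(↑(m + 1 - 1 - j) : ℤ) = ν - n + l + 2*↑(r + j) := by omega
        rw [h1, h2]
    _ = ∑ t ∈ Finset.Ico r (r + (m + 1)),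
          (C ((n:ℤ) - l - 2*r) ((n:ℤ) - l - r - t) : ℂ) * I (ν - n + l + 2*t) z := by
        rw [Finset.sum_Ico_eq_sum_range, show r + (m + 1) - r = m + 1 by omega]
    _ = ∑ t ∈ Finset.range (n - l + 1),
          (C ((n:ℤ) - l - 2*r) ((n:ℤ) - l - r - t) : ℂ) * I (ν - n + l + 2*t) z := by
        apply Finset.sum_subset
        · intro x hx
          rw [Finset.mem_Ico] at hx
          rw [Finset.mem_range]
          omega
        · intro x hx hnx
          rw [Finset.mem_range] at hx
          rw [Finset.mem_Ico] at hnx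
          push_neg at hnx
          rcases lt_or_ge x r with hxr | hxr
          · rw [C_zero_lt (show (0:ℤ) ≤ (n:ℤ) - l - 2*r by omega)
              (show (n:ℤ) - l - 2*r < (n:ℤ) - l - r - x by omega)]
            simp
          · have := hnx hxr
            rw [C_neg (show (n:ℤ) - l - r - x < 0 by omega)]
            simp

theorem stmt_18 (I : ℤ → ℂ → ℂ)
    (hrec : ∀ (ν : ℤ) (n : ℕ) (z : ℂ),
      (2 : ℂ) ^ n * iteratedDeriv n (I ν) z
        = ∑ r ∈ Finset.range (n + 1), (C n r : ℂ) * I (ν + n - 2 * r) z)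
    (ν : ℤ) (l n : ℕ) (hl : l ≤ n) (z : ℂ) :
    ∑ r ∈ Finset.range ((n - l) / 2 + 1),
        (D n r : ℂ) * 2 ^ (n - 2 * r) * (C ((n : ℤ) - 2 * r) l : ℂ)
          * iteratedDeriv (n - l - 2 * r) (I ν) z
      = 2 ^ l * ∑ s ∈ Finset.range (n - l + 1),
          (B l n s : ℂ) * I (ν - n + l + 2 * s) z := by
  have lhs_eq : ∑ r ∈ Finset.range ((n - l) / 2 + 1),
      (D n r : ℂ) * 2 ^ (n - 2 * r) * (C ((n : ℤ) - 2 * r) l : ℂ)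
        * iteratedDeriv (n - l - 2 * r) (I ν) z
      = 2 ^ l * ∑ r ∈ Finset.range ((n - l) / 2 + 1), ∑ t ∈ Finset.range (n - l + 1),
          (D n r : ℂ) * (C ((n : ℤ) - 2 * r) l : ℂ)
            * ((C ((n:ℤ) - l - 2*r) ((n:ℤ) - l - r - t) : ℂ) * I (ν - n + l + 2*t) z) := by
    rw [Finset.mul_sum]
    apply Finset.sum_congr rfl
    intro r hr
    rw [Finset.mem_range] at hr
    have h2r : 2*r ≤ n - l := by omega
    calc (D n r : ℂ) * 2 ^ (n - 2 * r) * (C ((n : ℤ) - 2 * r) l : ℂ)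
          * iteratedDeriv (n - l - 2 * r) (I ν) z
        = 2 ^ l * ((D n r : ℂ) * (C ((n : ℤ) - 2 * r) l : ℂ)
            * ((2:ℂ) ^ (n - l - 2*r) * iteratedDeriv (n - l - 2 * r) (I ν) z)) := by
          rw [show n - 2*r = l + (n - l - 2*r) by omega, pow_add]
          ring
      _ = 2 ^ l * ((D n r : ℂ) * (C ((n : ℤ) - 2 * r) l : ℂ)
            * ∑ j ∈ Finset.range ((n - l - 2*r) + 1),
                (C (↑(n - l - 2*r)) ↑j : ℂ) * I (ν + ↑(n - l - 2*r) - 2*↑j) z) := by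
          rw [hrec ν (n - l - 2*r) z]
      _ = 2 ^ l * ((D n r : ℂ) * (C ((n : ℤ) - 2 * r) l : ℂ)
            * ∑ t ∈ Finset.range (n - l + 1),
                (C ((n:ℤ) - l - 2*r) ((n:ℤ) - l - r - t) : ℂ) * I (ν - n + l + 2*t) z) := by
          rw [C_inner_sum I ν z n l r hl h2r]
      _ = 2 ^ l * ∑ t ∈ Finset.range (n - l + 1),
            (D n r : ℂ) * (C ((n : ℤ) - 2 * r) l : ℂ)
              * ((C ((n:ℤ) - l - 2*r) ((n:ℤ) - l - r - t) : ℂ) * I (ν - n + l + 2*t) z) := by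
          rw [Finset.mul_sum]
  rw [lhs_eq, Finset.sum_comm]
  congr 1
  apply Finset.sum_congr rfl
  intro t ht
  rw [Finset.mem_range] at ht
  have hp2 := part2 n l t hl (by omega)
  have hp2c : ((B (l:ℤ) (n:ℤ) (t:ℤ) : ℤ) : ℂ)
      = ((∑ r ∈ Finset.range ((n - l)/2 + 1),
          (D n r : ℤ) * C ((n:ℤ) - 2*r) l * C ((n:ℤ) - l - 2*r) ((n:ℤ) - l - r - t) : ℤ) : ℂ) := by
    rw [hp2]
  rw [hp2c]
  push_cast
  rw [Finset.sum_mul]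
  apply Finset.sum_congr rfl
  intro r _
  ring
end
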